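/- Let K be a field of characteristic 0, V a finite-dimensional K-vector space, N : V → V a nilpotent endomorphism, and α ∈ K^×. On the K[X]-module V ⊗_K K[X] define the operator D = N ⊗ id + id_V ⊗ (α · d/dX) (a derivation over (K[X], α·d/dX)). For v ∈ V set w(v) = Σ_{k ≥ 0} (-1)^k α^{-k}/k! · N^k(v) ⊗ X^k (a finite sum since N is nilpotent). Then: (1) D(w(v)) = 0 for all v ∈ V; (2) v ↦ w(v) is a K-linear isomorphism from V onto ker D, so that ker D is a K-vector space of dimension dim V; (3) the natural multiplication map K[X] ⊗_K ker D → V ⊗_K K[X] is an isomorphism of K[X]-modules. -/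

import Mathlib

open TensorProduct

set_option maxHeartbeats 1000000
set_option synthInstance.maxHeartbeats 400000

/-- The operator `D = id ⊗ (α·d/dX) + N ⊗ id` on `K[X] ⊗_K V`. -/
noncomputable def Dop (K : Type*) [Field K] (V : Type*) [AddCommGroup V] [Module K V]
    (N : V →ₗ[K] V) (α : K) :
    (Polynomial K ⊗[K] V) →ₗ[K] (Polynomial K ⊗[K] V) :=
  TensorProduct.map (α • (Polynomial.derivative : Polynomial K →ₗ[K] Polynomial K))
      LinearMap.id
    + TensorProduct.map LinearMap.id N

/-- `w(v) = Σ_k (-1)^k α^{-k}/k! · N^k(v) ⊗ X^k` (a finite sum, `N` being nilpotent of index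
at most `n`). -/
noncomputable def wsol (K : Type*) [Field K] (V : Type*) [AddCommGroup V] [Module K V]
    (N : V →ₗ[K] V) (α : K) (n : ℕ) (v : V) : Polynomial K ⊗[K] V :=
  ∑ k ∈ Finset.range n,
    (((-1 : K) ^ k * α⁻¹ ^ k) / (k.factorial : K)) • ((Polynomial.X ^ k) ⊗ₜ[K] ((N ^ k) v))

section Aux

variable (K : Type*) [Field K] (V : Type*) [AddCommGroup V] [Module K V]

/-- The coefficient coordinates: `K[X] ⊗ V ≃ (ℕ →₀ V)`. -/
noncomputable def phiEq : (Polynomial K ⊗[K] V) ≃ₗ[K] (ℕ →₀ V) :=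
  (TensorProduct.congr ((Polynomial.toFinsuppIsoAlg K).toLinearEquiv.trans
      (AddMonoidAlgebra.coeffLinearEquiv K))
      (LinearEquiv.refl K V)).trans (TensorProduct.finsuppScalarLeft K V ℕ)

variable {K V}

/-- The coefficient sequence. -/
noncomputable def csol (α : K) (k : ℕ) : K := ((-1 : K) ^ k * α⁻¹ ^ k) / (k.factorial : K)

lemma phiEq_tmul (p : Polynomial K) (v : V) (k : ℕ) :
    phiEq K V (p ⊗ₜ[K] v) k = p.coeff k • v := by
  simp [phiEq, Polynomial.toFinsuppIsoAlg, Polynomial.toFinsuppIso, Polynomial.coeff,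
    TensorProduct.finsuppScalarLeft_apply_tmul_apply]

lemma phiEq_Dop (N : V →ₗ[K] V) (α : K) (t : Polynomial K ⊗[K] V) (k : ℕ) :
    phiEq K V (Dop K V N α t) k
      = (α * ((k : K) + 1)) • (phiEq K V t (k + 1)) + N (phiEq K V t k) := by
  induction t using TensorProduct.induction_on with
  | zero => simp
  | tmul p v =>
      have h1 : Dop K V N α (p ⊗ₜ[K] v) = (α • Polynomial.derivative p) ⊗ₜ[K] v + p ⊗ₜ[K] (N v) := by
        simp [Dop]
      rw [h1, map_add, Finsupp.add_apply, phiEq_tmul, phiEq_tmul, phiEq_tmul,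
        Polynomial.coeff_smul, Polynomial.coeff_derivative, smul_eq_mul, phiEq_tmul, map_smul]
      module
  | add x y hx hy => simp only [map_add, hx, hy, Finsupp.add_apply, smul_add]; abel

lemma csol_key [CharZero K] (α : Kˣ) (k : ℕ) :
    ((α : K) * ((k : K) + 1)) * csol (α : K) (k + 1) = - csol (α : K) k := by
  have h1 : ((k.factorial : K)) ≠ 0 := Nat.cast_ne_zero.mpr k.factorial_ne_zero
  have hα : (α : K) ≠ 0 := α.ne_zero
  have hk1 : ((k : K) + 1) ≠ 0 := by
    have := Nat.cast_add_one_ne_zero (R := K) k; exact_mod_cast this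
  simp only [csol, Nat.factorial_succ, pow_succ, Nat.cast_mul, Nat.cast_add, Nat.cast_one]
  field_simp

lemma phiEq_wsol (N : V →ₗ[K] V) (α : K) (n : ℕ) (v : V) (k : ℕ) :
    phiEq K V (wsol K V N α n v) k
      = if k < n then csol α k • (N ^ k) v else 0 := by
  have : ∀ j : ℕ, phiEq K V
      ((((-1 : K) ^ j * α⁻¹ ^ j) / (j.factorial : K)) •
        ((Polynomial.X ^ j) ⊗ₜ[K] ((N ^ j) v))) k
      = if j = k then csol α j • (N ^ j) v else 0 := by
    intro j
    rw [map_smul, Finsupp.smul_apply, phiEq_tmul, Polynomial.coeff_X_pow]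
    by_cases h : k = j <;> simp [h, csol, eq_comm]
  rw [wsol, map_sum, Finsupp.finset_sum_apply]
  simp only [this]
  rw [Finset.sum_ite_eq' (Finset.range n) k fun j => csol α j • (N ^ j) v]
  simp [Finset.mem_range]

end Aux

/-- for `N` nilpotent on a finite-dimensional `K`-vector space `V` (char 0) and
`α ∈ K^×`: (1) `D(w(v)) = 0`; (2) `w` is a `K`-linear isomorphism of `V` onto `ker D`, which has
dimension `dim V`; (3) the natural multiplication map `K[X] ⊗_K ker D → V ⊗_K K[X]` is an
isomorphism of `K[X]`-modules. -/
theorem horizontal_sections_of_nilpotent_connection (K : Type*) [Field K] [CharZero K]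
    (V : Type*) [AddCommGroup V] [Module K V] [FiniteDimensional K V]
    (N : V →ₗ[K] V) (n : ℕ) (hN : N ^ n = 0) (α : Kˣ) :
    (∀ v : V, Dop K V N (α : K) (wsol K V N (α : K) n v) = 0) ∧
    (∀ (c : K) (v v' : V),
      wsol K V N (α : K) n (c • v + v')
        = c • wsol K V N (α : K) n v + wsol K V N (α : K) n v') ∧
    Function.Injective (wsol K V N (α : K) n) ∧
    Set.range (wsol K V N (α : K) n) = (LinearMap.ker (Dop K V N (α : K)) : Set _) ∧
    Module.finrank K (LinearMap.ker (Dop K V N (α : K))) = Module.finrank K V ∧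
    Function.Bijective
      (LinearMap.liftBaseChange (Polynomial K)
        ((LinearMap.ker (Dop K V N (α : K))).subtype)) := by
  classical
  have hαne : (α : K) ≠ 0 := α.ne_zero
  have hNk : ∀ k, n ≤ k → (N ^ k : V →ₗ[K] V) = 0 := fun k hk => pow_eq_zero_of_le hk hN
  -- (1)
  have h1 : ∀ v : V, Dop K V N (α : K) (wsol K V N (α : K) n v) = 0 := by
    intro v
    apply (phiEq K V).injective
    rw [map_zero]
    ext k
    simp only [Finsupp.coe_zero, Pi.zero_apply]
    rw [phiEq_Dop, phiEq_wsol, phiEq_wsol]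
    rcases lt_trichotomy (k + 1) n with h | h | h
    · have hk : k < n := lt_of_le_of_lt (Nat.le_succ k) h
      rw [if_pos h, if_pos hk, map_smul, ← Module.End.mul_apply, ← pow_succ', smul_smul,
        ← add_smul, csol_key α k]
      simp
    · have hk : k < n := h ▸ Nat.lt_succ_self k
      rw [if_neg (by omega), if_pos hk, smul_zero, zero_add, map_smul,
        ← Module.End.mul_apply, ← pow_succ', h, hN]
      simp
    · rw [if_neg (by omega), if_neg (by omega)]
      simp
  -- (2)
  have h2 : ∀ (c : K) (v v' : V),
      wsol K V N (α : K) n (c • v + v')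
        = c • wsol K V N (α : K) n v + wsol K V N (α : K) n v' := by
    intro c v v'
    rw [wsol, wsol, wsol, Finset.smul_sum, ← Finset.sum_add_distrib]
    refine Finset.sum_congr rfl fun k _ => ?_
    rw [map_add, map_smul, TensorProduct.tmul_add, TensorProduct.tmul_smul, smul_add,
      smul_comm]
  -- (3) injectivity
  have hinj : Function.Injective (wsol K V N (α : K) n) := by
    rcases Nat.eq_zero_or_pos n with hn | hn
    · subst hn
      have hV : ∀ v : V, v = 0 := fun v => by simpa using LinearMap.congr_fun hN v
      intro a b _
      rw [hV a, hV b]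
    · intro a b hab
      have h := congrArg (fun t => phiEq K V t 0) hab
      simp only [phiEq_wsol, if_pos hn] at h
      simpa [csol] using h
  -- (4) kernel description
  have hker : ∀ t, Dop K V N (α : K) t = 0 →
      ∀ k, phiEq K V t k = csol (α : K) k • (N ^ k) (phiEq K V t 0) := by
    intro t ht k
    induction k with
    | zero => simp [csol]
    | succ k ih =>
      have h0 := phiEq_Dop N (α : K) t k
      rw [ht, map_zero] at h0
      simp only [Finsupp.coe_zero, Pi.zero_apply] at h0
      have hne : ((α : K) * ((k : K) + 1)) ≠ 0 :=
        mul_ne_zero hαne (Nat.cast_add_one_ne_zero k)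
      apply smul_right_injective V hne
      show ((α : K) * ((k : K) + 1)) • phiEq K V t (k + 1)
        = ((α : K) * ((k : K) + 1)) • (csol (α : K) (k + 1) • (N ^ (k + 1)) (phiEq K V t 0))
      have ha : ((α : K) * ((k : K) + 1)) • phiEq K V t (k + 1) = -(N (phiEq K V t k)) :=
        eq_neg_of_add_eq_zero_left h0.symm
      rw [ha, ih, map_smul, ← Module.End.mul_apply, ← pow_succ', smul_smul, csol_key α k,
        neg_smul]
  have hrange : Set.range (wsol K V N (α : K) n)
      = (LinearMap.ker (Dop K V N (α : K)) : Set _) := by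
    ext t
    constructor
    · rintro ⟨v, rfl⟩
      simpa [LinearMap.mem_ker] using h1 v
    · intro ht
      have ht' : Dop K V N (α : K) t = 0 := ht
      refine ⟨phiEq K V t 0, ?_⟩
      apply (phiEq K V).injective
      ext k
      rw [phiEq_wsol]
      by_cases hk : k < n
      · rw [if_pos hk, ← hker t ht' k]
      · rw [if_neg hk, hker t ht' k, hNk k (le_of_not_gt hk)]
        simp
  -- (5) dimension
  let W : V →ₗ[K] Polynomial K ⊗[K] V :=
    { toFun := wsol K V N (α : K) n
      map_add' := fun a b => by simpa using h2 1 a b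
      map_smul' := fun c a => by
        have h0 : wsol K V N (α : K) n (0 : V) = 0 := by simp [wsol]
        have := h2 c a 0
        simpa [h0] using this }
  have hinjW : Function.Injective (⇑W) := hinj
  have hrangeSub : LinearMap.range W = LinearMap.ker (Dop K V N (α : K)) := by
    apply SetLike.coe_injective
    rw [LinearMap.coe_range]
    exact hrange
  have h5 : Module.finrank K (LinearMap.ker (Dop K V N (α : K))) = Module.finrank K V := by
    rw [← hrangeSub]
    exact LinearMap.finrank_range_of_inj hinjW
  -- (6) base change bijectivity
  have h6 : Function.Bijective
      (LinearMap.liftBaseChange (Polynomial K)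
        ((LinearMap.ker (Dop K V N (α : K))).subtype)) := by
    rcases Nat.eq_zero_or_pos n with hn | hn
    · subst hn
      have hV : ∀ v : V, v = 0 := fun v => by simpa using LinearMap.congr_fun hN v
      haveI : Subsingleton V := ⟨fun a b => by rw [hV a, hV b]⟩
      refine ⟨fun a b _ => Subsingleton.elim a b, fun y => ⟨(1 : Polynomial K) ⊗ₜ[K] 0, Subsingleton.elim _ _⟩⟩
    · obtain ⟨m, rfl⟩ : ∃ m, n = m + 1 := ⟨n - 1, by omega⟩
      set T : Module.End K (Polynomial K ⊗[K] V) :=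
        TensorProduct.map (LinearMap.mulLeft K (Polynomial.X : Polynomial K)) N with hT
      have hTpow : ∀ k, T ^ k
          = TensorProduct.map (LinearMap.mulLeft K ((Polynomial.X : Polynomial K) ^ k))
              (N ^ k) := by
        intro k
        rw [hT, TensorProduct.map_pow, LinearMap.pow_mulLeft]
      have hTn : T ^ (m + 1) = 0 := by
        rw [hTpow, hN]
        ext p v
        simp
      set M : Module.End K (Polynomial K ⊗[K] V) :=
        ∑ k ∈ Finset.range (m + 1), csol (α : K) k • T ^ k with hM
      have hMbij : Function.Bijective M := by
        rw [← Module.End.isUnit_iff]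
        have hsplit : M = (∑ k ∈ Finset.range m, csol (α : K) (k + 1) • T ^ (k + 1)) + 1 := by
          rw [hM, Finset.sum_range_succ']
          congr 1
          simp [csol]
        rw [hsplit]
        have hnil : IsNilpotent (∑ k ∈ Finset.range m, csol (α : K) (k + 1) • T ^ (k + 1)) := by
          apply Commute.isNilpotent_sum
          · intro k _
            refine ⟨m + 1, ?_⟩
            rw [smul_pow, ← pow_mul, pow_eq_zero_of_le (Nat.le_mul_of_pos_left _ k.succ_pos) hTn,
              smul_zero]
          · intro i j _ _
            exact (((Commute.refl T).pow_pow _ _).smul_left _).smul_right _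
        rw [add_comm]
        exact IsNilpotent.isUnit_add_left_of_commute (R := Module.End K (Polynomial K ⊗[K] V))
          (u := 1) hnil isUnit_one (Commute.one_right _)
      let Wk : V →ₗ[K] (LinearMap.ker (Dop K V N (α : K))) :=
        LinearMap.codRestrict _ W (fun v => LinearMap.mem_ker.mpr (h1 v))
      have hWkbij : Function.Bijective Wk := by
        constructor
        · intro a b hab
          exact hinj (congrArg Subtype.val hab)
        · rintro ⟨t, ht⟩
          obtain ⟨v, hv⟩ : t ∈ Set.range (wsol K V N (α : K) (m + 1)) := by
            rw [hrange]; exact ht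
          exact ⟨v, Subtype.ext hv⟩
      let E := TensorProduct.congr (LinearEquiv.refl K (Polynomial K))
        (LinearEquiv.ofBijective Wk hWkbij)
      have hLE : ∀ x, (LinearMap.liftBaseChange (Polynomial K)
          ((LinearMap.ker (Dop K V N (α : K))).subtype)) (E x) = M x := by
        intro x
        induction x using TensorProduct.induction_on with
        | zero => simp
        | tmul p v =>
          have hE : E (p ⊗ₜ[K] v) = p ⊗ₜ[K] (Wk v) := by
            simp [E, TensorProduct.congr_tmul]
          rw [hE, LinearMap.liftBaseChange_tmul]
          have hsub : ((LinearMap.ker (Dop K V N (α : K))).subtype) (Wk v)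
              = wsol K V N (α : K) (m + 1) v := rfl
          rw [hsub, hM]
          rw [wsol, Finset.smul_sum]
          rw [LinearMap.sum_apply]
          refine Finset.sum_congr rfl fun k _ => ?_
          rw [LinearMap.smul_apply, hTpow, TensorProduct.map_tmul]
          rw [smul_comm, TensorProduct.smul_tmul']
          congr 2
          · simp [Polynomial.smul_eq_C_mul]
            ring
        | add x y hx hy => simp [map_add, hx, hy]
      have hfun : ⇑(LinearMap.liftBaseChange (Polynomial K)
          ((LinearMap.ker (Dop K V N (α : K))).subtype)) = ⇑M ∘ ⇑E.symm := by
        funext y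
        rw [Function.comp_apply, ← hLE (E.symm y), LinearEquiv.apply_symm_apply]
      rw [hfun]
      exact hMbij.comp E.symm.bijective
  exact ⟨h1, h2, hinj, hrange, h5, h6⟩
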